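/- arXiv:1001.3655 — 2 statements merged into one kernel-verified Lean document; each statement's English description precedes it below -/
import Mathlib

section
/- Let k ∈ ℕ. If Φ is a k-superpositive linear map on L(V) and Ψ is a k-positive linear map on L(V), then both compositions Φ∘Ψ and Ψ∘Φ are k-superpositive. -/
open scoped ComplexOrder Kronecker
open Matrix

/-- Square complex matrices of size `n`, i.e. operators on `V = ℂ^n`. -/
abbrev Mat (n : ℕ) := Matrix (Fin n) (Fin n) ℂ

/-- Operators on `V ⊗ V`, identified with matrices indexed by pairs. -/
abbrev Mat2 (n : ℕ) := Matrix (Fin n × Fin n) (Fin n × Fin n) ℂ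

/-- Linear maps on `L(V)`. -/
abbrev MapV (n : ℕ) := Mat n →ₗ[ℂ] Mat n

variable {n : ℕ}

/-- The Jamiołkowski isomorphism `J(Φ) = (Φ ⊗ id)(|ω⟩⟨ω|)`, `ω = Σ_α e_α ⊗ e_α`,
written out in matrix entries: `J(Φ)_{(a,b),(c,d)} = Φ(E_{bd})_{ac}`. -/
def Jmat (Φ : MapV n) : Mat2 n :=
  Matrix.of fun p q => Φ (Matrix.single p.2 q.2 1) p.1 q.1

/-- The inverse of the Jamiołkowski isomorphism. -/
noncomputable def Jinv (A : Mat2 n) : MapV n where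
  toFun ξ := Matrix.of fun α β => ∑ γ, ∑ δ, ξ γ δ * A (α, γ) (β, δ)
  map_add' x y := by
    ext α β
    simp [Matrix.add_apply, add_mul, Finset.sum_add_distrib]
  map_smul' c x := by
    ext α β
    simp [Matrix.smul_apply, smul_eq_mul, Finset.mul_sum, mul_assoc]

/-- The circled product `A ⊙ B = J(J⁻¹(A) ∘ J⁻¹(B))`. -/
noncomputable def odot (A B : Mat2 n) : Mat2 n := Jmat (Jinv A ∘ₗ Jinv B)

/-- Tensor product of vectors of `V`, as a vector of `V ⊗ V`. -/
def vecTens (u v : Fin n → ℂ) : Fin n × Fin n → ℂ := fun p => u p.1 * v p.2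

/-- The maximally entangled (unnormalized) vector `ω = Σ_α e_α ⊗ e_α`. -/
def omegaVec (n : ℕ) : Fin n × Fin n → ℂ := fun p => if p.1 = p.2 then 1 else 0

/-- `A` is `k`-block positive: `⟨Σ u_i⊗v_i, A (Σ u_i⊗v_i)⟩ ≥ 0` for all `u, v`. -/
def IsKBlockPos (k : ℕ) (A : Mat2 n) : Prop :=
  ∀ u v : Fin k → (Fin n → ℂ),
    0 ≤ star (∑ i, vecTens (u i) (v i)) ⬝ᵥ A.mulVec (∑ i, vecTens (u i) (v i))

/-- `A` is `k`-entangled: it lies in the convex hull of the operators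
`|w⟩⟨w|` with `w = Σ_{i=1}^k u_i ⊗ v_i`. -/
def IsKEntangled (k : ℕ) (A : Mat2 n) : Prop :=
  A ∈ convexHull ℝ {M : Mat2 n | ∃ u v : Fin k → (Fin n → ℂ),
    M = Matrix.vecMulVec (∑ i, vecTens (u i) (v i)) (star (∑ i, vecTens (u i) (v i)))}

/-- The map `Φ ⊗ id_k` on `L(V ⊗ ℂ^k)` (as a plain function on matrices). -/
def tensorIdFun (k : ℕ) (Φ : MapV n) (M : Matrix (Fin n × Fin k) (Fin n × Fin k) ℂ) :
    Matrix (Fin n × Fin k) (Fin n × Fin k) ℂ :=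
  Matrix.of fun p q => Φ (Matrix.of fun a b => M (a, p.2) (b, q.2)) p.1 q.1

/-- `Φ` is `k`-positive: `Φ ⊗ id_k` maps positive semidefinite operators on
`V ⊗ ℂ^k` to positive semidefinite operators. -/
def IsKPos (k : ℕ) (Φ : MapV n) : Prop :=
  ∀ M : Matrix (Fin n × Fin k) (Fin n × Fin k) ℂ, M.PosSemidef → (tensorIdFun k Φ M).PosSemidef

/-- `Φ` is completely positive: `k`-positive for every `k`. -/
def IsCompPos (Φ : MapV n) : Prop := ∀ k, IsKPos k Φ

/-- `Φ` is `k`-superpositive: `Φ(ξ) = Σ_i X_i^* ξ X_i` with all `rank X_i ≤ k`. -/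
def IsKSuperPos (k : ℕ) (Φ : MapV n) : Prop :=
  ∃ (m : ℕ) (X : Fin m → Mat n), (∀ i, (X i).rank ≤ k) ∧
    ∀ ξ, Φ ξ = ∑ i, (X i)ᴴ * ξ * X i

/-- The Hilbert–Schmidt inner product on `L(L(V))`:
`(Φ|Ψ) = Σ_{α,β} (Φ(E_{αβ}) | Ψ(E_{αβ}))` over the matrix-unit orthonormal basis. -/
noncomputable def hsInnerMap (Φ Ψ : MapV n) : ℂ :=
  ∑ α : Fin n, ∑ β : Fin n,
    ((Φ (Matrix.single α β 1))ᴴ * Ψ (Matrix.single α β 1)).trace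

/-- The Hilbert–Schmidt trace of a map `Θ` on `L(V)`:
`Tr Θ = Σ_{α,β} (E_{αβ} | Θ(E_{αβ}))`. -/
noncomputable def mapTrace (Θ : MapV n) : ℂ :=
  ∑ α : Fin n, ∑ β : Fin n,
    ((Matrix.single α β (1 : ℂ))ᴴ * Θ (Matrix.single α β 1)).trace

/-- The adjoint of a map `Φ` on `L(V)` with respect to the Hilbert–Schmidt
inner product `(A|B) = Tr(A^* B)`. -/
noncomputable def hsAdj (Φ : MapV n) : MapV n where
  toFun ξ := ∑ γ : Fin n, ∑ δ : Fin n,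
    (((Φ (Matrix.single γ δ 1))ᴴ * ξ).trace) • Matrix.single γ δ 1
  map_add' x y := by
    simp [Matrix.mul_add, Matrix.trace_add, add_smul, Finset.sum_add_distrib]
  map_smul' c x := by
    simp [Matrix.mul_smul, Matrix.trace_smul, smul_smul, Finset.smul_sum]

/-- `Φ` belongs to `J⁻¹(H(V⊗V))`, i.e. `J(Φ)` is Hermitian. -/
def InJinvH (Φ : MapV n) : Prop := (Jmat Φ).IsHermitian

/-- Dual cone of a set of Hermitian operators on `V ⊗ V`, inside `H(V⊗V)`. -/
def hermDual (S : Set (Mat2 n)) : Set (Mat2 n) :=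
  {B | B.IsHermitian ∧ ∀ A ∈ S, 0 ≤ (A * B).trace}

/-- Dual cone of a set of maps, inside `J⁻¹(H(V⊗V))`, with respect to the
Hilbert–Schmidt inner product of maps. -/
def mapDual (S : Set (MapV n)) : Set (MapV n) :=
  {Ψ | InJinvH Ψ ∧ ∀ Φ ∈ S, 0 ≤ hsInnerMap Φ Ψ}

/-- Operators on `ℂ^h ⊗ ℂ^d`. -/
abbrev MatH (h d : ℕ) := Matrix (Fin h × Fin d) (Fin h × Fin d) ℂ

/-- `ρ` is a state: positive semidefinite with trace one. -/
def IsState {h d : ℕ} (ρ : MatH h d) : Prop := ρ.PosSemidef ∧ ρ.trace = 1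

/-- `ρ` can be written as a sum of `l` tensor products of positive semidefinite
operators. -/
def HasSepLen (h d : ℕ) (ρ : MatH h d) (l : ℕ) : Prop :=
  ∃ (A : Fin l → Matrix (Fin h) (Fin h) ℂ) (B : Fin l → Matrix (Fin d) (Fin d) ℂ),
    (∀ i, (A i).PosSemidef) ∧ (∀ i, (B i).PosSemidef) ∧ ρ = ∑ i, A i ⊗ₖ B i

/-- `ρ` is separable: a convex combination of tensor products of states. -/
def IsSepState (h d : ℕ) (ρ : MatH h d) : Prop :=
  ∃ (l : ℕ) (p : Fin l → ℝ) (A : Fin l → Matrix (Fin h) (Fin h) ℂ)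
    (B : Fin l → Matrix (Fin d) (Fin d) ℂ),
    (∀ i, 0 < p i) ∧ (∑ i, p i = 1) ∧
    (∀ i, (A i).PosSemidef ∧ (A i).trace = 1) ∧
    (∀ i, (B i).PosSemidef ∧ (B i).trace = 1) ∧
    ρ = ∑ i, (p i : ℂ) • (A i ⊗ₖ B i)

/-- The length of a separable state: the least `l` such that `ρ` is a sum of `l`
tensor products of positive semidefinite operators. -/
noncomputable def sepLength (h d : ℕ) (ρ : MatH h d) : ℕ := sInf {l | HasSepLen h d ρ l}

/-- `ρ` is a sum of `r` tensor products of Hermitian operators. -/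
def HasHermDecomp (h d : ℕ) (ρ : MatH h d) (r : ℕ) : Prop :=
  ∃ (A : Fin r → Matrix (Fin h) (Fin h) ℂ) (B : Fin r → Matrix (Fin d) (Fin d) ℂ),
    (∀ i, (A i).IsHermitian) ∧ (∀ i, (B i).IsHermitian) ∧ ρ = ∑ i, A i ⊗ₖ B i

/-- The Schmidt rank of `ρ`: the least `r` such that `ρ` is a sum of `r` tensor
products of Hermitian operators. -/
noncomputable def schmidtRank (h d : ℕ) (ρ : MatH h d) : ℕ := sInf {r | HasHermDecomp h d ρ r}

/-- The block `(⟨υ|⊗id) A (|υ⟩⊗id)` of an operator `A` on `V ⊗ V`. -/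
noncomputable def blockFst (A : Mat2 n) (υ : Fin n → ℂ) : Mat n :=
  Matrix.of fun β δ => ∑ α, ∑ γ, star (υ α) * A (α, β) (γ, δ) * υ γ

/-- The block `(id⊗⟨u|) A (id⊗|u⟩)` of an operator `A` on `V ⊗ V`. -/
noncomputable def blockSnd (A : Mat2 n) (u : Fin n → ℂ) : Mat n :=
  Matrix.of fun α γ => ∑ β, ∑ δ, star (u β) * A (α, β) (γ, δ) * u δ

/-- Real square matrices indexed by pairs: operators on `X ⊗ X`, `X = ℝ^n`. -/
abbrev RMat2 (n : ℕ) := Matrix (Fin n × Fin n) (Fin n × Fin n) ℝ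

/-- The partial transposition `(id ⊗ t) A` on operators on `X ⊗ X`. -/
def ptrans (A : RMat2 n) : RMat2 n := Matrix.of fun p q => A (p.1, q.2) (q.1, p.2)

/-- The quartic polynomial `Σ_{a,b,c,d} A_{ab,cd} x^a y^b x^c y^d` associated to
an operator on `X ⊗ X`; `x`-variables are indexed by `Sum.inl`, `y`-variables
by `Sum.inr`. -/
noncomputable def quarticPoly (A : RMat2 n) : MvPolynomial (Fin n ⊕ Fin n) ℝ :=
  ∑ a, ∑ b, ∑ c, ∑ e, MvPolynomial.C (A (a, b) (c, e)) *
    MvPolynomial.X (Sum.inl a) * MvPolynomial.X (Sum.inr b) *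
    MvPolynomial.X (Sum.inl c) * MvPolynomial.X (Sum.inr e)

/-!
Write each Kraus operator of `Φ` as `X = C * B` with `C : ℂ^k → V` and `B : V → ℂ^k`, and let
`Ad Y ξ = Yᴴ ξ Y`. Then `Ψ ∘ Ad X = (Ψ ∘ Ad B) ∘ Ad C` and `Ad X ∘ Ψ = Ad B ∘ (Ad C ∘ Ψ)`.
The maps `Ψ ∘ Ad B : L(ℂ^k) → L(V)` and `Ad C ∘ Ψ : L(V) → L(ℂ^k)` have positive semidefinite
Choi matrices: the first is `(Ψ ⊗ id_k)(|w⟩⟨w|)` for a vector `w` built from `B`, and the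
quadratic form of the second at `z` is the quadratic form of the first (with `B` built from `z`)
at `C`. By Choi's theorem both maps have Kraus decompositions with operators through `ℂ^k`;
composing these with `C` resp. `B` gives Kraus operators of rank at most `k`.
-/

theorem Matrix.exists_mul_eq_of_rank_le {K : Type*} [Field K] {m n : Type*} [Fintype m]
    [Fintype n] [DecidableEq n] (X : Matrix m n K) {k : ℕ} (hX : X.rank ≤ k) :
    ∃ (C : Matrix m (Fin k) K) (B : Matrix (Fin k) n K), X = C * B := by
  set R := LinearMap.range X.mulVecLin
  let e : R ≃ₗ[K] (Fin X.rank → K) := (Module.finBasisOfFinrankEq K R rfl).equivFun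
  let ι := Fin.castLE hX
  have hι : ∀ w, LinearMap.funLeft K K ι (Function.ExtendByZero.linearMap K ι w) = w :=
    fun w => Function.extend_comp (Fin.castLE_injective hX) w 0
  let f := R.subtype ∘ₗ e.symm.toLinearMap ∘ₗ LinearMap.funLeft K K ι
  let g := Function.ExtendByZero.linearMap K ι ∘ₗ e.toLinearMap ∘ₗ X.mulVecLin.rangeRestrict
  have hfg : f ∘ₗ g = X.mulVecLin := LinearMap.ext fun v => by simp [f, g, hι]
  refine ⟨LinearMap.toMatrix' f, LinearMap.toMatrix' g, ?_⟩
  rw [← LinearMap.toMatrix'_comp, hfg, ← Matrix.toLin'_apply', LinearMap.toMatrix'_toLin']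

theorem Matrix.posSemidef_of_forall_dotProduct_mulVec_nonneg {n : Type*} [Fintype n]
    [DecidableEq n] {A : Matrix n n ℂ} (h : ∀ x, 0 ≤ star x ⬝ᵥ A *ᵥ x) : A.PosSemidef := by
  rw [← Matrix.isPositive_toEuclideanLin_iff, LinearMap.isPositive_iff_complex]
  intro x
  obtain ⟨r, hr, hq⟩ := RCLike.nonneg_iff_exists_ofReal.mp (h x.ofLp)
  have hstar : x.ofLp ⬝ᵥ star (A *ᵥ x.ofLp) = star (star x.ofLp ⬝ᵥ A *ᵥ x.ofLp) := by
    rw [star_dotProduct, star_star, dotProduct_comm]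
  simp [EuclideanSpace.inner_eq_star_dotProduct, hstar, ← hq, hr]

section ConjMap

variable {m n : Type*} [Fintype m]

@[simps]
def conjMap (X : Matrix m n ℂ) : Matrix m m ℂ →ₗ[ℂ] Matrix n n ℂ where
  toFun ξ := Xᴴ * ξ * X
  map_add' ξ η := by rw [Matrix.mul_add, Matrix.add_mul]
  map_smul' c ξ := by rw [Matrix.mul_smul, Matrix.smul_mul, RingHom.id_apply]

theorem conjMap_mul {l : Type*} [Fintype l] (X : Matrix m l ℂ) (Y : Matrix l n ℂ) :
    conjMap (X * Y) = conjMap Y ∘ₗ conjMap X := by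
  ext ξ : 1
  simp only [conjMap_apply, LinearMap.comp_apply, Matrix.conjTranspose_mul, Matrix.mul_assoc]

theorem conjMap_single [DecidableEq m] (X : Matrix m n ℂ) (a b : m) :
    conjMap X (single a b 1) = vecMulVec (star (X a)) (X b) := by
  rw [conjMap_apply, single_eq_single_vecMulVec_single, Matrix.mul_vecMulVec, vecMulVec_mul,
    mulVec_single_one, single_one_vecMul]
  rfl

end ConjMap

section Choi

variable {m n : Type*} [Fintype m] [DecidableEq m]

/-- The Choi matrix, with the output index first: `choiMatrix Θ (i, a) (j, b) = Θ(E_ab)_ij`. -/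
def choiMatrix (Θ : Matrix m m ℂ →ₗ[ℂ] Matrix n n ℂ) : Matrix (n × m) (n × m) ℂ :=
  of fun p q => Θ (single p.2 q.2 1) p.1 q.1

theorem map_apply_eq_sum_choiMatrix (Θ : Matrix m m ℂ →ₗ[ℂ] Matrix n n ℂ) (ξ : Matrix m m ℂ)
    (i j : n) : Θ ξ i j = ∑ a, ∑ b, ξ a b * choiMatrix Θ (i, a) (j, b) := by
  conv_lhs => rw [matrix_eq_sum_single ξ]
  have hsingle : ∀ a b, single a b (ξ a b) = ξ a b • single a b 1 := fun a b => by
    rw [smul_single, smul_eq_mul, mul_one]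
  simp only [hsingle, map_sum, map_smul, Matrix.sum_apply, Matrix.smul_apply, smul_eq_mul,
    choiMatrix, of_apply]

theorem choiMatrix_injective :
    Function.Injective (choiMatrix : (Matrix m m ℂ →ₗ[ℂ] Matrix n n ℂ) → _) := by
  intro Θ Θ' h
  ext ξ i j : 3
  simp only [map_apply_eq_sum_choiMatrix, h]

/-- Choi's theorem (one direction). -/
theorem exists_eq_sum_conjMap_of_posSemidef_choiMatrix [Fintype n] [DecidableEq n]
    {Θ : Matrix m m ℂ →ₗ[ℂ] Matrix n n ℂ} (hΘ : (choiMatrix Θ).PosSemidef) :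
    ∃ K : n × m → Matrix m n ℂ, Θ = ∑ j, conjMap (K j) := by
  obtain ⟨A, hA⟩ : ∃ A, choiMatrix Θ = star A * A := by
    open scoped MatrixOrder in
    exact CStarAlgebra.nonneg_iff_eq_star_mul_self.mp hΘ.nonneg
  refine ⟨fun j => of fun a i => A j (i, a), choiMatrix_injective ?_⟩
  rw [hA]
  ext ⟨i, a⟩ ⟨j, b⟩
  simp [-conjMap_apply, choiMatrix, Matrix.mul_apply, LinearMap.sum_apply, conjMap_single,
    Matrix.sum_apply, vecMulVec_apply]

theorem star_dotProduct_choiMatrix_mulVec_eq_sum_map [Fintype n] [DecidableEq n]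
    (Θ : Matrix m m ℂ →ₗ[ℂ] Matrix n n ℂ) (Z : Matrix n m ℂ) :
    star (fun p => Z p.1 p.2) ⬝ᵥ choiMatrix Θ *ᵥ (fun p => Z p.1 p.2)
      = ∑ i, ∑ j, Θ (conjMap Z (single i j 1)) i j := by
  simp only [map_apply_eq_sum_choiMatrix, conjMap_single, dotProduct, mulVec,
    Fintype.sum_prod_type, Finset.mul_sum, vecMulVec_apply, Pi.star_apply]
  refine Finset.sum_congr rfl fun i _ => ?_
  rw [Finset.sum_comm]
  refine Finset.sum_congr rfl fun j _ => Finset.sum_congr rfl fun a _ =>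
    Finset.sum_congr rfl fun b _ => ?_
  ring

theorem star_dotProduct_choiMatrix_mulVec_eq_sum_conjMap [Fintype n]
    (Θ : Matrix m m ℂ →ₗ[ℂ] Matrix n n ℂ) (Z : Matrix n m ℂ) :
    star (fun p => Z p.1 p.2) ⬝ᵥ choiMatrix Θ *ᵥ (fun p => Z p.1 p.2)
      = ∑ a, ∑ b, conjMap Z (Θ (single a b 1)) a b := by
  simp only [conjMap_apply, dotProduct, mulVec, Fintype.sum_prod_type, mul_apply, Finset.mul_sum,
    Finset.sum_mul, conjTranspose_apply, choiMatrix, of_apply, Pi.star_apply]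
  rw [Finset.sum_comm]
  refine Finset.sum_congr rfl fun a _ => ?_
  refine (Finset.sum_congr rfl fun i _ => Finset.sum_comm).trans ?_
  rw [Finset.sum_comm]
  refine Finset.sum_congr rfl fun b _ => ?_
  rw [Finset.sum_comm]
  refine Finset.sum_congr rfl fun j _ => Finset.sum_congr rfl fun i _ => ?_
  ring

end Choi

section KPositive

variable {d k : ℕ} {Ψ : MapV d}

theorem IsKPos.posSemidef_choiMatrix_comp_conjMap (hΨ : IsKPos k Ψ)
    (B : Matrix (Fin k) (Fin d) ℂ) : (choiMatrix (Ψ ∘ₗ conjMap B)).PosSemidef := by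
  let w : Fin d × Fin k → ℂ := fun p => B p.2 p.1
  have hchoi : choiMatrix (Ψ ∘ₗ conjMap B) = tensorIdFun k Ψ (vecMulVec (star w) w) := by
    ext p q
    simp only [choiMatrix, tensorIdFun, LinearMap.comp_apply, conjMap_single, of_apply]
    rfl
  rw [hchoi]
  exact hΨ _ (posSemidef_vecMulVec_star_self w)

theorem IsKPos.posSemidef_choiMatrix_conjMap_comp (hΨ : IsKPos k Ψ)
    (C : Matrix (Fin d) (Fin k) ℂ) : (choiMatrix (conjMap C ∘ₗ Ψ)).PosSemidef := by
  refine posSemidef_of_forall_dotProduct_mulVec_nonneg fun z => ?_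
  let Z : Matrix (Fin k) (Fin d) ℂ := of fun b α => z (b, α)
  have hz : star z ⬝ᵥ choiMatrix (conjMap C ∘ₗ Ψ) *ᵥ z
      = star (fun p => C p.1 p.2) ⬝ᵥ choiMatrix (Ψ ∘ₗ conjMap Z) *ᵥ (fun p => C p.1 p.2) := by
    rw [star_dotProduct_choiMatrix_mulVec_eq_sum_conjMap (Ψ ∘ₗ conjMap Z) C]
    exact star_dotProduct_choiMatrix_mulVec_eq_sum_map (conjMap C ∘ₗ Ψ) Z
  rw [hz]
  exact (hΨ.posSemidef_choiMatrix_comp_conjMap Z).dotProduct_mulVec_nonneg _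

end KPositive

section SuperPositive

variable {d k : ℕ}

theorem isKSuperPos_of_eq_sum {ι : Type*} [Fintype ι] {Φ : MapV d} (X : ι → Mat d)
    (hX : ∀ i, (X i).rank ≤ k) (hΦ : Φ = ∑ i, conjMap (X i)) : IsKSuperPos k Φ := by
  let e := Fintype.equivFin ι
  refine ⟨Fintype.card ι, X ∘ e.symm, fun j => hX _, fun ξ => ?_⟩
  rw [hΦ, LinearMap.sum_apply, ← e.symm.sum_comp]
  rfl

theorem IsKSuperPos.exists_eq_sum_conjMap {Φ : MapV d} (hΦ : IsKSuperPos k Φ) :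
    ∃ (m : ℕ) (X : Fin m → Mat d), (∀ i, (X i).rank ≤ k) ∧ Φ = ∑ i, conjMap (X i) := by
  obtain ⟨m, X, hX, hΦX⟩ := hΦ
  refine ⟨m, X, hX, LinearMap.ext fun ξ => ?_⟩
  rw [hΦX, LinearMap.sum_apply]
  rfl

theorem isKSuperPos_sum {ι : Type*} [Fintype ι] {Φ : ι → MapV d}
    (hΦ : ∀ i, IsKSuperPos k (Φ i)) : IsKSuperPos k (∑ i, Φ i) := by
  choose m X hX hΦX using fun i => (hΦ i).exists_eq_sum_conjMap
  refine isKSuperPos_of_eq_sum (fun p : Σ i, Fin (m i) => X p.1 p.2) (fun p => hX p.1 p.2) ?_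
  rw [Fintype.sum_sigma]
  exact Finset.sum_congr rfl fun i _ => hΦX i

variable {Ψ : MapV d}

theorem IsKPos.isKSuperPos_comp_conjMap (hΨ : IsKPos k Ψ) {X : Mat d} (hX : X.rank ≤ k) :
    IsKSuperPos k (Ψ ∘ₗ conjMap X) := by
  obtain ⟨C, B, rfl⟩ := X.exists_mul_eq_of_rank_le hX
  obtain ⟨Y, hY⟩ :=
    exists_eq_sum_conjMap_of_posSemidef_choiMatrix (hΨ.posSemidef_choiMatrix_comp_conjMap B)
  refine isKSuperPos_of_eq_sum (fun j => C * Y j)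
    (fun j => (rank_mul_le_left _ _).trans (rank_le_width C)) ?_
  rw [conjMap_mul, ← LinearMap.comp_assoc, hY]
  ext ξ : 1
  simp [LinearMap.sum_apply, conjMap_mul]

theorem IsKPos.isKSuperPos_conjMap_comp (hΨ : IsKPos k Ψ) {X : Mat d} (hX : X.rank ≤ k) :
    IsKSuperPos k (conjMap X ∘ₗ Ψ) := by
  obtain ⟨C, B, rfl⟩ := X.exists_mul_eq_of_rank_le hX
  obtain ⟨W, hW⟩ :=
    exists_eq_sum_conjMap_of_posSemidef_choiMatrix (hΨ.posSemidef_choiMatrix_conjMap_comp C)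
  refine isKSuperPos_of_eq_sum (fun j => W j * B)
    (fun j => (rank_mul_le_left _ _).trans (rank_le_width (W j))) ?_
  rw [conjMap_mul, LinearMap.comp_assoc, hW]
  ext ξ : 1
  simp [LinearMap.sum_apply, conjMap_mul]

end SuperPositive

theorem stmt9_general (d : ℕ) (k : ℕ) (Φ Ψ : MapV d)
    (hΦ : IsKSuperPos k Φ) (hΨ : IsKPos k Ψ) :
    IsKSuperPos k (Φ ∘ₗ Ψ) ∧ IsKSuperPos k (Ψ ∘ₗ Φ) := by
  obtain ⟨m, X, hX, rfl⟩ := hΦ.exists_eq_sum_conjMap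
  simp only [← Module.End.mul_eq_comp, Finset.sum_mul, Finset.mul_sum]
  exact ⟨isKSuperPos_sum fun i => hΨ.isKSuperPos_conjMap_comp (hX i),
    isKSuperPos_sum fun i => hΨ.isKSuperPos_comp_conjMap (hX i)⟩

/-- if `Φ` is `k`-superpositive and `Ψ` is `k`-positive, then both
`Φ ∘ Ψ` and `Ψ ∘ Φ` are `k`-superpositive. -/
theorem stmt9 (d : ℕ) (hd : 0 < d) (k : ℕ) (Φ Ψ : MapV d)
    (hΦ : IsKSuperPos k Φ) (hΨ : IsKPos k Ψ) :
    IsKSuperPos k (Φ ∘ₗ Ψ) ∧ IsKSuperPos k (Ψ ∘ₗ Φ) :=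
  stmt9_general d k Φ Ψ hΦ hΨ
end

section
/- Let Φ be a linear map on L(V) such that J(Φ) is Hermitian, and let k ∈ ℕ. The following are equivalent: (1) Φ is k-positive; (2) Ψ∘Φ is k-superpositive for every k-superpositive map Ψ on L(V); (3) Ψ∘Φ is completely positive for every k-superpositive map Ψ on L(V); (4) ⟨ω, J(Ψ∘Φ) ω⟩ ≥ 0 for every k-superpositive map Ψ on L(V), where ω = Σ_α e_α⊗e_α. -/
open scoped ComplexOrder Kronecker
open Matrix

variable {n : ℕ}

/-! Everything passes through `k`-block positivity of `J(Φ)`: `⟨w, J(Φ) w⟩ ≥ 0` for every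
`w` of Schmidt rank at most `k`. Compressions of `J(Φ)` by `1 ⊗ G` or `C ⊗ 1`, with `G, C` of
width `k`, see exactly such vectors. The compressions by `1 ⊗ G` are the images
`(Φ ⊗ id_k)(|x⟩⟨x|)` of rank-one projections, so block positivity is `k`-positivity (1). For a
Kraus operator `X = C D` of rank `≤ k`, `C : d × k`, the compression by `C ⊗ 1` is the Choi
matrix of `ξ ↦ Cᴴ Φ(ξ) C`; being positive semidefinite it yields Kraus operators `B r`, hence
Kraus operators `B r * D` of rank `≤ k` for `ξ ↦ Xᴴ Φ(ξ) X` (2). Kraus maps are completely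
positive (3), and (4) evaluates `J(Ψ ∘ Φ) = (X ⊗ 1)ᴴ J(Φ) (X ⊗ 1)` at `ω`, where `(X ⊗ 1) ω`
is the vectorization of `X`, an arbitrary vector of Schmidt rank `≤ k`. -/

open Finset

namespace Matrix

/-- Over `ℂ` the hermiticity built into `PosSemidef` is automatic: a real quadratic form
comes from a Hermitian matrix, by polarization. -/
theorem posSemidef_iff_forall_dotProduct_mulVec_nonneg {ι : Type*} [Fintype ι]
    {A : Matrix ι ι ℂ} : A.PosSemidef ↔ ∀ x, 0 ≤ star x ⬝ᵥ A *ᵥ x := by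
  classical
  refine ⟨fun h => h.dotProduct_mulVec_nonneg, fun h => ?_⟩
  rw [← isPositive_toEuclideanLin_iff, LinearMap.isPositive_iff_complex]
  intro x
  obtain ⟨r, hr, hrx⟩ := RCLike.nonneg_iff_exists_ofReal.mp (h x.ofLp)
  have : star (A *ᵥ x.ofLp) ⬝ᵥ x.ofLp = star (star x.ofLp ⬝ᵥ A *ᵥ x.ofLp) := by
    rw [star_dotProduct]
  simp only [EuclideanSpace.inner_eq_star_dotProduct, Matrix.ofLp_toLpLin, Matrix.toLin'_apply]
  rw [dotProduct_comm, this, ← hrx]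
  simpa using hr

theorem star_dotProduct_conjTranspose_mul_mul_mulVec {R ι κ : Type*} [CommSemiring R]
    [StarRing R] [Fintype ι] [Fintype κ] (A : Matrix ι ι R) (W : Matrix ι κ R) (z : κ → R) :
    star z ⬝ᵥ (Wᴴ * A * W) *ᵥ z = star (W *ᵥ z) ⬝ᵥ A *ᵥ (W *ᵥ z) := by
  simp only [star_mulVec, dotProduct_mulVec, vecMul_vecMul, Matrix.mul_assoc]

theorem exists_mul_eq_of_rank_le_s11 {K m n : Type*} [Field K] [Fintype m] [Fintype n]
    {X : Matrix m n K} {k : ℕ} (hX : X.rank ≤ k) :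
    ∃ (C : Matrix m (Fin k) K) (D : Matrix (Fin k) n K), X = C * D := by
  set W := Submodule.span K (Set.range X.col)
  have hW : Module.finrank K W ≤ k := by rwa [← rank_eq_finrank_span_cols]
  let b := Module.finBasis K W
  let f : (Fin k → K) →ₗ[K] W :=
    b.equivFun.symm.toLinearMap ∘ₗ LinearMap.funLeft K K (Fin.castLE hW)
  have hf : Function.Surjective f := b.equivFun.symm.surjective.comp
    (LinearMap.funLeft_surjective_of_injective _ _ _ (Fin.castLE_injective hW))
  choose d hd using fun a => hf ⟨X.col a, Submodule.subset_span ⟨a, rfl⟩⟩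
  refine ⟨LinearMap.toMatrix' (W.subtype ∘ₗ f), of fun j a => d a j, ?_⟩
  ext p a
  have hcol : X p a = (W.subtype ∘ₗ f) (d a) p :=
    congrArg (fun w : W => (w : m → K) p) (hd a).symm
  rw [hcol, ← LinearMap.toMatrix'_mulVec]
  rfl

theorem conjTranspose_mul_mul_apply {R α β γ : Type*} [CommSemiring R] [StarRing R]
    [Fintype α] (A : Matrix α β R) (M : Matrix α α R) (B : Matrix α γ R) (x : β) (y : γ) :
    (Aᴴ * M * B) x y = ∑ p, ∑ q, star (A p x) * M p q * B q y := by
  simp only [mul_apply, conjTranspose_apply, sum_mul]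
  rw [sum_comm]

end Matrix

section Choi

variable {ι κ : Type*} [Fintype ι]

/-- `Jinv` with rectangular target: the map whose Choi matrix is `K`. -/
def choiMap (K : Matrix (κ × ι) (κ × ι) ℂ) (ξ : Matrix ι ι ℂ) : Matrix κ κ ℂ :=
  of fun j j' => ∑ β, ∑ ε, ξ β ε * K (j, β) (j', ε)

theorem choiMap_Jmat {n : ℕ} (Φ : MapV n) (ξ : Mat n) : choiMap (Jmat Φ) ξ = Φ ξ := by
  conv_rhs => rw [matrix_eq_sum_single ξ]
  ext p q
  simp only [map_sum, Matrix.sum_apply, choiMap, of_apply, Jmat]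
  refine sum_congr rfl fun b _ => sum_congr rfl fun e _ => ?_
  rw [show single b e (ξ b e) = ξ b e • single b e 1 by rw [smul_single, smul_eq_mul, mul_one],
    map_smul, Matrix.smul_apply, smul_eq_mul]

theorem Jmat_eq_of_choiMap {n : ℕ} {Θ : MapV n} {K : Mat2 n} (hΘ : ∀ ξ, Θ ξ = choiMap K ξ) :
    Jmat Θ = K := by
  ext ⟨p, b⟩ ⟨q, e⟩
  simp [Jmat, hΘ, choiMap, single_apply, ite_and]

theorem conjTranspose_mul_choiMap_mul {κ' : Type*} [Fintype κ] [DecidableEq ι]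
    (K : Matrix (κ × ι) (κ × ι) ℂ) (C : Matrix κ κ' ℂ) (ξ : Matrix ι ι ℂ) :
    Cᴴ * choiMap K ξ * C =
      choiMap ((C ⊗ₖ (1 : Matrix ι ι ℂ))ᴴ * K * (C ⊗ₖ (1 : Matrix ι ι ℂ))) ξ := by
  ext j j'
  rw [conjTranspose_mul_mul_apply]
  simp only [choiMap, conjTranspose_mul_mul_apply, of_apply, kroneckerMap_apply, one_apply,
    Fintype.sum_prod_type, mul_ite, mul_one, mul_zero, apply_ite star, star_zero, ite_mul,
    zero_mul, sum_ite_irrel, sum_const_zero, sum_ite_eq', mem_univ, if_true, mul_sum, sum_mul]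
  simp only [sum_comm (γ := κ) (α := ι)]
  exact sum_congr rfl fun _ _ => sum_congr rfl fun _ _ => sum_congr rfl fun _ _ =>
    sum_congr rfl fun _ _ => by ring

theorem choiMap_sum {α : Type*} (s : Finset α) (K : α → Matrix (κ × ι) (κ × ι) ℂ)
    (ξ : Matrix ι ι ℂ) : choiMap (∑ a ∈ s, K a) ξ = ∑ a ∈ s, choiMap (K a) ξ := by
  ext j j'
  simp only [choiMap, of_apply, Matrix.sum_apply, mul_sum]
  exact (sum_congr rfl fun _ _ => sum_comm).trans sum_comm

theorem choiMap_vecMulVec (x : κ × ι → ℂ) (ξ : Matrix ι ι ℂ) :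
    choiMap (vecMulVec x (star x)) ξ =
      (of fun β j => star (x (j, β)))ᴴ * ξ * of fun β j => star (x (j, β)) := by
  ext j j'
  simp only [choiMap, of_apply, vecMulVec_apply, mul_apply, conjTranspose_apply, star_star,
    Pi.star_apply, sum_mul]
  rw [sum_comm]
  exact sum_congr rfl fun _ _ => sum_congr rfl fun _ _ => by ring

theorem exists_kraus_of_posSemidef [Finite κ] {K : Matrix (κ × ι) (κ × ι) ℂ}
    (hK : K.PosSemidef) :
    ∃ (m : ℕ) (Y : Fin m → Matrix ι κ ℂ), ∀ ξ, choiMap K ξ = ∑ i, (Y i)ᴴ * ξ * Y i := by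
  obtain ⟨m, x, rfl⟩ := posSemidef_iff_eq_sum_vecMulVec.mp hK
  exact ⟨m, fun i => of fun β j => star (x i (j, β)), fun ξ => by
    simp only [choiMap_sum, choiMap_vecMulVec]⟩

end Choi

section TensorId

variable {k : ℕ}

theorem tensorIdFun_sum {α : Type*} (Φ : MapV n) (s : Finset α)
    (M : α → Matrix (Fin n × Fin k) (Fin n × Fin k) ℂ) :
    tensorIdFun k Φ (∑ a ∈ s, M a) = ∑ a ∈ s, tensorIdFun k Φ (M a) := by
  ext P Q
  have hblock : (of fun a b => ∑ c ∈ s, M c (a, P.2) (b, Q.2)) =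
      ∑ c ∈ s, of fun a b => M c (a, P.2) (b, Q.2) := by
    ext; simp only [of_apply, Matrix.sum_apply]
  simp only [tensorIdFun, of_apply, Matrix.sum_apply, hblock, map_sum]

theorem tensorIdFun_vecMulVec (Φ : MapV n) (x : Fin n × Fin k → ℂ) :
    tensorIdFun k Φ (vecMulVec x (star x)) =
      ((1 : Mat n) ⊗ₖ of fun a s => star (x (a, s)))ᴴ * Jmat Φ *
        ((1 : Mat n) ⊗ₖ of fun a s => star (x (a, s))) := by
  ext ⟨p, s⟩ ⟨q, t⟩
  rw [tensorIdFun, of_apply, ← choiMap_Jmat, conjTranspose_mul_mul_apply]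
  simp only [choiMap, of_apply, vecMulVec_apply, kroneckerMap_apply, one_apply,
    Fintype.sum_prod_type, Pi.star_apply, star_star, ite_mul, one_mul, zero_mul, apply_ite star,
    star_zero, mul_ite, mul_zero, sum_ite_irrel, sum_const_zero, sum_ite_eq', mem_univ,
    if_true]
  exact sum_congr rfl fun _ _ => sum_congr rfl fun _ _ => by ring

theorem tensorIdFun_of_kraus {ι : Type*} [Fintype ι] {Θ : MapV n} {Y : ι → Mat n}
    (hΘ : ∀ ξ, Θ ξ = ∑ i, (Y i)ᴴ * ξ * Y i) (M : Matrix (Fin n × Fin k) (Fin n × Fin k) ℂ) :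
    tensorIdFun k Θ M = ∑ i,
      (Y i ⊗ₖ (1 : Matrix (Fin k) (Fin k) ℂ))ᴴ * M * (Y i ⊗ₖ (1 : Matrix (Fin k) (Fin k) ℂ)) := by
  ext ⟨p, s⟩ ⟨q, t⟩
  simp only [tensorIdFun, of_apply, hΘ, Matrix.sum_apply, conjTranspose_mul_mul_apply,
    kroneckerMap_apply, one_apply, Fintype.sum_prod_type, mul_ite, mul_one, mul_zero,
    apply_ite star, star_zero, ite_mul, zero_mul, sum_ite_irrel, sum_const_zero, sum_ite_eq',
    mem_univ, if_true]

theorem tensorIdFun_vecMulVec_omegaVec (Θ : MapV n) :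
    tensorIdFun n Θ (vecMulVec (omegaVec n) (star (omegaVec n))) = Jmat Θ := by
  ext ⟨p, s⟩ ⟨q, t⟩
  have hω : (of fun a b => vecMulVec (omegaVec n) (star (omegaVec n)) (a, s) (b, t)) =
      single s t 1 := by
    ext a b
    simp only [of_apply, vecMulVec_apply, omegaVec, Pi.star_apply, single_apply]
    split_ifs <;> simp_all
  simp only [tensorIdFun, Jmat, of_apply, hω]

end TensorId

section BlockPositivity

variable {k : ℕ}

theorem kronecker_one_mulVec {κ : Type*} [Fintype κ] (C : Matrix (Fin n) κ ℂ)
    (x : κ × Fin n → ℂ) :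
    (C ⊗ₖ (1 : Mat n)) *ᵥ x = ∑ j, vecTens (fun p => C p j) (fun e => x (j, e)) := by
  funext P
  simp only [mulVec, dotProduct, Fintype.sum_prod_type, kroneckerMap_apply, one_apply, vecTens,
    mul_ite, mul_one, mul_zero, ite_mul, zero_mul, sum_ite_eq, mem_univ, if_true,
    Finset.sum_apply]

theorem one_kronecker_mulVec {κ : Type*} [Fintype κ] (G : Matrix (Fin n) κ ℂ)
    (z : Fin n × κ → ℂ) :
    ((1 : Mat n) ⊗ₖ G) *ᵥ z = ∑ s, vecTens (fun p => z (p, s)) (fun a => G a s) := by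
  funext P
  simp only [mulVec, dotProduct, Fintype.sum_prod_type, kroneckerMap_apply, one_apply, vecTens,
    ite_mul, one_mul, zero_mul, sum_ite_irrel, sum_const_zero, sum_ite_eq, mem_univ, if_true,
    Finset.sum_apply]
  exact sum_congr rfl fun _ _ => mul_comm _ _

theorem kronecker_one_mulVec_omegaVec (X : Mat n) :
    (X ⊗ₖ (1 : Mat n)) *ᵥ omegaVec n = fun P => X P.1 P.2 := by
  funext P
  simp [mulVec, dotProduct, Fintype.sum_prod_type, one_apply, omegaVec]

theorem IsKBlockPos.posSemidef_conj {ι : Type*} [Fintype ι] {A : Mat2 n}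
    (hA : IsKBlockPos k A) {W : Matrix (Fin n × Fin n) ι ℂ}
    (hW : ∀ x, ∃ u v : Fin k → Fin n → ℂ, W *ᵥ x = ∑ i, vecTens (u i) (v i)) :
    (Wᴴ * A * W).PosSemidef := by
  refine posSemidef_iff_forall_dotProduct_mulVec_nonneg.mpr fun x => ?_
  obtain ⟨u, v, huv⟩ := hW x
  rw [star_dotProduct_conjTranspose_mul_mul_mulVec, huv]
  exact hA u v

theorem IsKPos.isKBlockPos_Jmat {Φ : MapV n} (hΦ : IsKPos k Φ) : IsKBlockPos k (Jmat Φ) := by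
  intro u v
  have h := (hΦ _ (posSemidef_vecMulVec_self_star fun P : Fin n × Fin k => star (v P.2 P.1)))
  rw [tensorIdFun_vecMulVec] at h
  have := h.dotProduct_mulVec_nonneg fun P => u P.2 P.1
  rw [star_dotProduct_conjTranspose_mul_mul_mulVec, one_kronecker_mulVec] at this
  simpa only [of_apply, star_star] using this

theorem IsKBlockPos.isKPos {Φ : MapV n} (hΦ : IsKBlockPos k (Jmat Φ)) : IsKPos k Φ := by
  intro M hM
  obtain ⟨m, x, rfl⟩ := posSemidef_iff_eq_sum_vecMulVec.mp hM
  rw [tensorIdFun_sum]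
  refine posSemidef_sum _ fun i _ => ?_
  rw [tensorIdFun_vecMulVec]
  exact hΦ.posSemidef_conj fun z => ⟨_, _, one_kronecker_mulVec _ z⟩

end BlockPositivity

section SuperPositivity

variable {k : ℕ}

theorem isKSuperPos_of_kraus {ι : Type*} [Fintype ι] {Θ : MapV n} {Y : ι → Mat n}
    (hY : ∀ i, (Y i).rank ≤ k) (hΘ : ∀ ξ, Θ ξ = ∑ i, (Y i)ᴴ * ξ * Y i) : IsKSuperPos k Θ :=
  let e := Fintype.equivFin ι
  ⟨Fintype.card ι, Y ∘ e.symm, fun _ => hY _, fun ξ => by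
    rw [hΘ]
    exact (e.symm.sum_comp fun i => (Y i)ᴴ * ξ * Y i).symm⟩

theorem isCompPos_of_kraus {ι : Type*} [Fintype ι] {Θ : MapV n} {Y : ι → Mat n}
    (hΘ : ∀ ξ, Θ ξ = ∑ i, (Y i)ᴴ * ξ * Y i) : IsCompPos Θ := fun _ M hM => by
  rw [tensorIdFun_of_kraus hΘ]
  exact posSemidef_sum _ fun i _ => hM.conjTranspose_mul_mul_same _

theorem IsKSuperPos.isCompPos {Θ : MapV n} (hΘ : IsKSuperPos k Θ) : IsCompPos Θ :=
  let ⟨_, _, _, hY⟩ := hΘ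
  isCompPos_of_kraus hY

theorem IsKBlockPos.exists_kraus_conj {Φ : MapV n} (hΦ : IsKBlockPos k (Jmat Φ)) {X : Mat n}
    (hX : X.rank ≤ k) :
    ∃ (m : ℕ) (Y : Fin m → Mat n), (∀ r, (Y r).rank ≤ k) ∧
      ∀ ξ, Xᴴ * Φ ξ * X = ∑ r, (Y r)ᴴ * ξ * Y r := by
  obtain ⟨C, D, rfl⟩ := exists_mul_eq_of_rank_le_s11 hX
  obtain ⟨m, B, hB⟩ := exists_kraus_of_posSemidef
    (hΦ.posSemidef_conj fun x => ⟨_, _, kronecker_one_mulVec C x⟩)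
  refine ⟨m, fun r => B r * D, fun r => (rank_mul_le_left _ _).trans (rank_le_width _),
    fun ξ => ?_⟩
  calc (C * D)ᴴ * Φ ξ * (C * D) = Dᴴ * (Cᴴ * choiMap (Jmat Φ) ξ * C) * D := by
        rw [choiMap_Jmat]; simp only [conjTranspose_mul, Matrix.mul_assoc]
    _ = Dᴴ * (∑ r, (B r)ᴴ * ξ * B r) * D := by rw [conjTranspose_mul_choiMap_mul, hB]
    _ = ∑ r, (B r * D)ᴴ * ξ * (B r * D) := by
        simp only [Matrix.mul_sum, Matrix.sum_mul, conjTranspose_mul, Matrix.mul_assoc]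

theorem IsKBlockPos.isKSuperPos_comp {Φ Ψ : MapV n} (hΦ : IsKBlockPos k (Jmat Φ))
    (hΨ : IsKSuperPos k Ψ) : IsKSuperPos k (Ψ ∘ₗ Φ) := by
  obtain ⟨m, X, hX, hΨ⟩ := hΨ
  choose l Y hY hXY using fun i => hΦ.exists_kraus_conj (hX i)
  refine isKSuperPos_of_kraus (Y := fun p : Σ i, Fin (l i) => Y p.1 p.2) (fun p => hY _ _)
    fun ξ => ?_
  rw [LinearMap.comp_apply, hΨ, Fintype.sum_sigma]
  exact sum_congr rfl fun i _ => hXY i ξ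

theorem Jmat_mulLeftRight_comp (Φ : MapV n) (X : Mat n) :
    Jmat (LinearMap.mulLeftRight ℂ (Xᴴ, X) ∘ₗ Φ) =
      (X ⊗ₖ (1 : Mat n))ᴴ * Jmat Φ * (X ⊗ₖ (1 : Mat n)) :=
  Jmat_eq_of_choiMap fun ξ => by
    rw [LinearMap.comp_apply, LinearMap.mulLeftRight_apply, ← choiMap_Jmat Φ ξ,
      conjTranspose_mul_choiMap_mul]

theorem isKBlockPos_Jmat_of_forall_dotProduct_omegaVec_nonneg {Φ : MapV n}
    (hΦ : ∀ Ψ : MapV n, IsKSuperPos k Ψ →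
      0 ≤ star (omegaVec n) ⬝ᵥ (Jmat (Ψ ∘ₗ Φ)).mulVec (omegaVec n)) :
    IsKBlockPos k (Jmat Φ) := by
  intro u v
  let X : Mat n := of (fun p i => u i p) * of fun i a => v i a
  have hX : X.rank ≤ k := (rank_mul_le_left _ _).trans (rank_le_width _)
  have h := hΦ _ (isKSuperPos_of_kraus (Y := fun _ : Unit => X) (fun _ => hX) fun ξ => by
    rw [LinearMap.mulLeftRight_apply, Fintype.sum_unique])
  rw [Jmat_mulLeftRight_comp, star_dotProduct_conjTranspose_mul_mul_mulVec,
    kronecker_one_mulVec_omegaVec] at h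
  have hw : (fun P : Fin n × Fin n => X P.1 P.2) = ∑ i, vecTens (u i) (v i) := by
    funext P
    simp [X, mul_apply, vecTens, Finset.sum_apply]
  rwa [hw] at h

theorem IsKPos.dotProduct_omegaVec_Jmat_nonneg {Θ : MapV n} (hΘ : IsKPos n Θ) :
    0 ≤ star (omegaVec n) ⬝ᵥ (Jmat Θ).mulVec (omegaVec n) := by
  rw [← tensorIdFun_vecMulVec_omegaVec]
  exact (hΘ _ (posSemidef_vecMulVec_self_star _)).dotProduct_mulVec_nonneg _

end SuperPositivity

theorem stmt11_general (d : ℕ) (k : ℕ) (Φ : MapV d) :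
    List.TFAE [IsKPos k Φ,
      ∀ Ψ : MapV d, IsKSuperPos k Ψ → IsKSuperPos k (Ψ ∘ₗ Φ),
      ∀ Ψ : MapV d, IsKSuperPos k Ψ → IsCompPos (Ψ ∘ₗ Φ),
      ∀ Ψ : MapV d, IsKSuperPos k Ψ →
        0 ≤ star (omegaVec d) ⬝ᵥ (Jmat (Ψ ∘ₗ Φ)).mulVec (omegaVec d)] := by
  tfae_have 1 → 2 := fun h _ => h.isKBlockPos_Jmat.isKSuperPos_comp
  tfae_have 2 → 3 := fun h Ψ hΨ => (h Ψ hΨ).isCompPos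
  tfae_have 3 → 4 := fun h Ψ hΨ => (h Ψ hΨ d).dotProduct_omegaVec_Jmat_nonneg
  tfae_have 4 → 1 := fun h =>
    (isKBlockPos_Jmat_of_forall_dotProduct_omegaVec_nonneg h).isKPos
  tfae_finish

/-- characterization of `k`-positive maps `Φ` with `J(Φ)`
Hermitian: (1) `Φ` is `k`-positive; (2) `Ψ∘Φ` is `k`-superpositive for all
`k`-superpositive `Ψ`; (3) `Ψ∘Φ` is completely positive for all
`k`-superpositive `Ψ`; (4) `⟨ω, J(Ψ∘Φ) ω⟩ ≥ 0` for all `k`-superpositive `Ψ`. -/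
theorem stmt11 (d : ℕ) (hd : 0 < d) (k : ℕ) (Φ : MapV d)
    (hΦ : (Jmat Φ).IsHermitian) :
    List.TFAE [IsKPos k Φ,
      ∀ Ψ : MapV d, IsKSuperPos k Ψ → IsKSuperPos k (Ψ ∘ₗ Φ),
      ∀ Ψ : MapV d, IsKSuperPos k Ψ → IsCompPos (Ψ ∘ₗ Φ),
      ∀ Ψ : MapV d, IsKSuperPos k Ψ →
        0 ≤ star (omegaVec d) ⬝ᵥ (Jmat (Ψ ∘ₗ Φ)).mulVec (omegaVec d)] :=
  stmt11_general d k Φ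
end
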